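/- There exists a constant c > 0 such that for every finite set S of axis-aligned squares whose side lengths all lie in [d, ψ·d] for some d > 0 and ψ ≥ 1, and every σ ∈ S, the set 𝒫(σ) has at most c·ψ elements. -/

import Mathlib

open Set

/-- A dyadic cell at level `level` (side length `2^level`) with lower-left corner
`(a·2^level, b·2^level)`. -/
structure DyadicCell where
  level : ℤ
  a : ℤ
  b : ℤ
deriving DecidableEq

/-- The side length of a dyadic cell. -/
noncomputable def DyadicCell.side (C : DyadicCell) : ℝ := 2 ^ C.level

/-- The dyadic cell as a subset of the plane. -/
noncomputable def DyadicCell.toSet (C : DyadicCell) : Set (ℝ × ℝ) :=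
  Set.Icc ((C.a : ℝ) * 2 ^ C.level) ((C.a + 1 : ℝ) * 2 ^ C.level) ×ˢ
    Set.Icc ((C.b : ℝ) * 2 ^ C.level) ((C.b + 1 : ℝ) * 2 ^ C.level)

/-- `5C`: the square obtained by scaling the cell `C` by a factor `5` about its center. -/
noncomputable def DyadicCell.scale5 (C : DyadicCell) : Set (ℝ × ℝ) :=
  Set.Icc ((C.a - 2 : ℝ) * 2 ^ C.level) ((C.a + 3 : ℝ) * 2 ^ C.level) ×ˢ
    Set.Icc ((C.b - 2 : ℝ) * 2 ^ C.level) ((C.b + 3 : ℝ) * 2 ^ C.level)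

/-- An axis-aligned square `[x, x+s] × [y, y+s]` of side length `s > 0`. -/
structure Square where
  x : ℝ
  y : ℝ
  s : ℝ
  s_pos : 0 < s

/-- The square as a subset of the plane. -/
noncomputable def Square.toSet (σ : Square) : Set (ℝ × ℝ) :=
  Set.Icc σ.x (σ.x + σ.s) ×ˢ Set.Icc σ.y (σ.y + σ.s)

/-- The center of a square. -/
noncomputable def Square.center (σ : Square) : ℝ × ℝ := (σ.x + σ.s / 2, σ.y + σ.s / 2)

/-- `C` is a storing cell of `σ`: a dyadic cell of maximal side length among those that
contain the center of `σ` and are contained in `σ`. -/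
def IsStoringCell (σ : Square) (C : DyadicCell) : Prop :=
  σ.center ∈ C.toSet ∧ C.toSet ⊆ σ.toSet ∧
    ∀ D : DyadicCell, σ.center ∈ D.toSet → D.toSet ⊆ σ.toSet → D.side ≤ C.side

/-- `C` is a storing cell of the set `S` (with fixed storing-cell choice `c`):
some square of `S` is stored in `C`. -/
def IsStoringCellOf (S : Finset Square) (c : Square → DyadicCell) (C : DyadicCell) : Prop :=
  ∃ σ ∈ S, c σ = C

/-- `π(C)`: the squares of `S` stored in `C`. -/
def piCell (S : Finset Square) (c : Square → DyadicCell) (C : DyadicCell) : Set Square :=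
  {σ | σ ∈ S ∧ c σ = C}

/-- `𝒞(σ)`: the dyadic cells `D ⊆ σ` containing at least one storing cell of `S`,
maximal with both properties. -/
def calC (S : Finset Square) (c : Square → DyadicCell) (σ : Square) : Set DyadicCell :=
  {D | D.toSet ⊆ σ.toSet ∧ (∃ E, IsStoringCellOf S c E ∧ E.toSet ⊆ D.toSet) ∧
    ¬ ∃ D' : DyadicCell, D.toSet ⊂ D'.toSet ∧ D'.toSet ⊆ σ.toSet ∧
      ∃ E, IsStoringCellOf S c E ∧ E.toSet ⊆ D'.toSet}

/-- `𝒫(γ)`: the storing cells `D` of `S` with `side(D) ≤ side(γ)` such that `5D`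
intersects the boundary of `γ`. -/
def calP (S : Finset Square) (c : Square → DyadicCell) (γ : Square) : Set DyadicCell :=
  {D | IsStoringCellOf S c D ∧ D.side ≤ γ.s ∧ (D.scale5 ∩ frontier γ.toSet).Nonempty}


namespace Statement12Aux

lemma tpos (l : ℤ) : (0:ℝ) < 2 ^ l := by positivity

lemma mem_toSet {C : DyadicCell} {p : ℝ × ℝ} :
    p ∈ C.toSet ↔ ((C.a:ℝ) * 2^C.level ≤ p.1 ∧ p.1 ≤ ((C.a:ℝ)+1)*2^C.level)
      ∧ ((C.b:ℝ) * 2^C.level ≤ p.2 ∧ p.2 ≤ ((C.b:ℝ)+1)*2^C.level) := by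
  simp [DyadicCell.toSet, Set.mem_prod, Set.mem_Icc, Prod.le_def, and_assoc]; tauto

lemma mem_sq {σ : Square} {p : ℝ × ℝ} :
    p ∈ σ.toSet ↔ (σ.x ≤ p.1 ∧ p.1 ≤ σ.x + σ.s) ∧ (σ.y ≤ p.2 ∧ p.2 ≤ σ.y + σ.s) := by
  simp [Square.toSet, Set.mem_prod, Set.mem_Icc, Prod.le_def, and_assoc]; tauto

lemma mem_scale5 {C : DyadicCell} {p : ℝ × ℝ} :
    p ∈ C.scale5 ↔ (((C.a:ℝ) - 2) * 2^C.level ≤ p.1 ∧ p.1 ≤ ((C.a:ℝ)+3)*2^C.level)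
      ∧ (((C.b:ℝ) - 2) * 2^C.level ≤ p.2 ∧ p.2 ≤ ((C.b:ℝ)+3)*2^C.level) := by
  simp [DyadicCell.scale5, Set.mem_prod, Set.mem_Icc, Prod.le_def, and_assoc]; tauto

lemma side_le_of_subset {σ : Square} {C : DyadicCell} (h : C.toSet ⊆ σ.toSet) :
    C.side ≤ σ.s := by
  have ht := tpos C.level
  have h1 : ((C.a:ℝ) * 2^C.level, (C.b:ℝ) * 2^C.level) ∈ C.toSet := by
    rw [mem_toSet]; refine ⟨⟨?_, ?_⟩, ?_, ?_⟩ <;> simp <;> nlinarith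
  have h2 : (((C.a:ℝ)+1) * 2^C.level, (C.b:ℝ) * 2^C.level) ∈ C.toSet := by
    rw [mem_toSet]; refine ⟨⟨?_, ?_⟩, ?_, ?_⟩ <;> simp <;> nlinarith
  have g1 := (mem_sq.mp (h h1)).1
  have g2 := (mem_sq.mp (h h2)).1
  simp only at g1 g2
  have : ((C.a:ℝ)+1) * 2^C.level = (C.a:ℝ) * 2^C.level + 2^C.level := by ring
  rw [DyadicCell.side]
  linarith [g1.1, g2.2]

lemma floor_mul_le (u t : ℝ) (ht : 0 < t) : (⌊u/t⌋ : ℝ) * t ≤ u := by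
  have h := Int.floor_le (u/t)
  calc (⌊u/t⌋:ℝ) * t ≤ (u/t) * t := by nlinarith
    _ = u := div_mul_cancel₀ u ht.ne'

lemma le_floor_add_one_mul (u t : ℝ) (ht : 0 < t) : u ≤ ((⌊u/t⌋ : ℝ) + 1) * t := by
  have h := (Int.lt_floor_add_one (u/t)).le
  calc u = (u/t)*t := (div_mul_cancel₀ u ht.ne').symm
    _ ≤ ((⌊u/t⌋:ℝ)+1)*t := by nlinarith

lemma storing_side_lb {σ : Square} {C : DyadicCell} (h : IsStoringCell σ C) :
    σ.s / 4 < C.side := by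
  have hs := σ.s_pos
  set m := Int.log 2 (σ.s/2) with hm
  have h1 : (2:ℝ)^m ≤ σ.s/2 := Int.zpow_log_le_self (by norm_num) (by linarith)
  have h2 : σ.s/2 < (2:ℝ)^(m+1) := Int.lt_zpow_succ_log_self (by norm_num) _
  have h2' : σ.s / 4 < (2:ℝ)^m := by
    rw [zpow_add_one₀ (by norm_num : (2:ℝ) ≠ 0)] at h2; linarith
  have ht : (0:ℝ) < 2^m := tpos m
  set t : ℝ := (2:ℝ)^m with htdef
  set xc := σ.x + σ.s/2 with hxc
  set yc := σ.y + σ.s/2 with hyc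
  set D : DyadicCell := ⟨m, ⌊xc/t⌋, ⌊yc/t⌋⟩ with hD
  have hcen : σ.center ∈ D.toSet := by
    rw [mem_toSet]
    exact ⟨⟨floor_mul_le xc t ht, le_floor_add_one_mul xc t ht⟩,
      ⟨floor_mul_le yc t ht, le_floor_add_one_mul yc t ht⟩⟩
  have hsub : D.toSet ⊆ σ.toSet := by
    intro p hp
    rw [mem_toSet] at hp
    rw [mem_sq]
    have fx1 := floor_mul_le xc t ht
    have fx2 := le_floor_add_one_mul xc t ht
    have fy1 := floor_mul_le yc t ht
    have fy2 := le_floor_add_one_mul yc t ht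
    have ex : ((⌊xc/t⌋:ℝ)+1)*t = (⌊xc/t⌋:ℝ)*t + t := by ring
    have ey : ((⌊yc/t⌋:ℝ)+1)*t = (⌊yc/t⌋:ℝ)*t + t := by ring
    obtain ⟨⟨p11, p12⟩, ⟨p21, p22⟩⟩ := hp
    simp only [hD] at p11 p12 p21 p22
    constructor <;> constructor <;> [skip; skip; skip; skip]
    · -- σ.x ≤ p.1 :  p.1 ≥ ⌊xc/t⌋ t ≥ xc - t ≥ σ.x
      nlinarith [fx2]
    · nlinarith [fx1]
    · nlinarith [fy2]
    · nlinarith [fy1]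
  have := h.2.2 D hcen hsub
  have hDside : D.side = t := rfl
  rw [hDside] at this
  linarith

/-- the integers `b` such that `[(b-2)t, (b+3)t]` can meet `[u,v]` -/
noncomputable def Inear (u v : ℝ) (l : ℤ) : Finset ℤ := Finset.Icc (⌈u/2^l⌉ - 3) (⌊v/2^l⌋ + 2)

lemma mem_Inear {u v q : ℝ} {l b : ℤ} (hq1 : u ≤ q) (hq2 : q ≤ v)
    (h1 : ((b:ℝ) - 2) * 2^l ≤ q) (h2 : q ≤ ((b:ℝ) + 3) * 2^l) : b ∈ Inear u v l := by
  have ht := tpos l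
  rw [Inear, Finset.mem_Icc]
  constructor
  · have hle : u / 2^l ≤ ((b:ℝ) + 3) := by rw [div_le_iff₀ ht]; linarith
    have : ⌈u/2^l⌉ ≤ b + 3 := Int.ceil_le.mpr (by push_cast; linarith)
    omega
  · have hle : ((b:ℝ) - 2) ≤ v / 2^l := by rw [le_div_iff₀ ht]; linarith
    have : b - 2 ≤ ⌊v/2^l⌋ := Int.le_floor.mpr (by push_cast; linarith)
    omega

lemma card_Inear {u v : ℝ} (l : ℤ) (huv : u ≤ v) :
    ((Inear u v l).card : ℝ) ≤ (v - u)/2^l + 6 := by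
  have ht := tpos l
  have hdiv : u/2^l ≤ v/2^l := by gcongr
  have h1 : u/2^l ≤ (⌈u/2^l⌉ : ℝ) := Int.le_ceil _
  have h1' : (⌈u/2^l⌉ : ℝ) < u/2^l + 1 := Int.ceil_lt_add_one _
  have h2 : (⌊v/2^l⌋ : ℝ) ≤ v/2^l := Int.floor_le _
  have h2' : v/2^l < (⌊v/2^l⌋ : ℝ) + 1 := Int.lt_floor_add_one _
  rw [Inear, Int.card_Icc]
  have hz : (0:ℤ) ≤ ⌊v/2^l⌋ + 2 + 1 - (⌈u/2^l⌉ - 3) := by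
    have : (⌈u/2^l⌉ : ℝ) ≤ (⌊v/2^l⌋ : ℝ) + 2 := by linarith
    have : ⌈u/2^l⌉ ≤ ⌊v/2^l⌋ + 2 := by exact_mod_cast this
    omega
  have hcast : (((⌊v/2^l⌋ + 2 + 1 - (⌈u/2^l⌉ - 3)).toNat : ℕ) : ℝ)
      = (⌊v/2^l⌋ : ℝ) + 2 + 1 - ((⌈u/2^l⌉ : ℝ) - 3) := by
    rw [← Int.cast_natCast, Int.toNat_of_nonneg hz]; push_cast; ring
  rw [hcast, sub_div]
  linarith

noncomputable def Tlev (σ : Square) (l : ℤ) : Finset (ℤ × ℤ) :=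
  ((Inear σ.x σ.x l ∪ Inear (σ.x+σ.s) (σ.x+σ.s) l) ×ˢ Inear σ.y (σ.y+σ.s) l) ∪
  (Inear σ.x (σ.x+σ.s) l ×ˢ (Inear σ.y σ.y l ∪ Inear (σ.y+σ.s) (σ.y+σ.s) l))

lemma card_Tlev (σ : Square) (l : ℤ) :
    ((Tlev σ l).card : ℝ) ≤ 24 * (σ.s / 2^l) + 144 := by
  have ht := tpos l
  have hs := σ.s_pos
  have hst : (0:ℝ) ≤ σ.s / 2^l := by positivity
  have cxx := card_Inear (u := σ.x) (v := σ.x) l le_rfl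
  have cxx' := card_Inear (u := σ.x+σ.s) (v := σ.x+σ.s) l le_rfl
  have cyy := card_Inear (u := σ.y) (v := σ.y) l le_rfl
  have cyy' := card_Inear (u := σ.y+σ.s) (v := σ.y+σ.s) l le_rfl
  have cx := card_Inear (u := σ.x) (v := σ.x+σ.s) l (by linarith)
  have cy := card_Inear (u := σ.y) (v := σ.y+σ.s) l (by linarith)
  simp only [sub_self, zero_div, add_sub_cancel_left] at cxx cxx' cyy cyy' cx cy
  have hu1 : ((Inear σ.x σ.x l ∪ Inear (σ.x+σ.s) (σ.x+σ.s) l).card : ℝ) ≤ 12 := by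
    have := Finset.card_union_le (Inear σ.x σ.x l) (Inear (σ.x+σ.s) (σ.x+σ.s) l)
    have : (((Inear σ.x σ.x l ∪ Inear (σ.x+σ.s) (σ.x+σ.s) l).card : ℝ)) ≤
        ((Inear σ.x σ.x l).card : ℝ) + ((Inear (σ.x+σ.s) (σ.x+σ.s) l).card : ℝ) := by
      exact_mod_cast this
    linarith
  have hu2 : ((Inear σ.y σ.y l ∪ Inear (σ.y+σ.s) (σ.y+σ.s) l).card : ℝ) ≤ 12 := by
    have := Finset.card_union_le (Inear σ.y σ.y l) (Inear (σ.y+σ.s) (σ.y+σ.s) l)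
    have : (((Inear σ.y σ.y l ∪ Inear (σ.y+σ.s) (σ.y+σ.s) l).card : ℝ)) ≤
        ((Inear σ.y σ.y l).card : ℝ) + ((Inear (σ.y+σ.s) (σ.y+σ.s) l).card : ℝ) := by
      exact_mod_cast this
    linarith
  have hsplit := Finset.card_union_le
    ((Inear σ.x σ.x l ∪ Inear (σ.x+σ.s) (σ.x+σ.s) l) ×ˢ Inear σ.y (σ.y+σ.s) l)
    (Inear σ.x (σ.x+σ.s) l ×ˢ (Inear σ.y σ.y l ∪ Inear (σ.y+σ.s) (σ.y+σ.s) l))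
  have hTle : ((Tlev σ l).card : ℝ) ≤
      ((Inear σ.x σ.x l ∪ Inear (σ.x+σ.s) (σ.x+σ.s) l).card : ℝ) * ((Inear σ.y (σ.y+σ.s) l).card : ℝ)
      + ((Inear σ.x (σ.x+σ.s) l).card : ℝ) * ((Inear σ.y σ.y l ∪ Inear (σ.y+σ.s) (σ.y+σ.s) l).card : ℝ) := by
    rw [Finset.card_product, Finset.card_product] at hsplit
    rw [Tlev]
    exact_mod_cast hsplit
  have hA : ((Inear σ.x σ.x l ∪ Inear (σ.x+σ.s) (σ.x+σ.s) l).card : ℝ) * ((Inear σ.y (σ.y+σ.s) l).card : ℝ)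
      ≤ 12 * (σ.s / 2^l + 6) := by
    apply mul_le_mul hu1 cy (by positivity) (by norm_num)
  have hB : ((Inear σ.x (σ.x+σ.s) l).card : ℝ) * ((Inear σ.y σ.y l ∪ Inear (σ.y+σ.s) (σ.y+σ.s) l).card : ℝ)
      ≤ (σ.s / 2^l + 6) * 12 := by
    apply mul_le_mul cx hu2 (by positivity) (by positivity)
  linarith

lemma Icc_int_succ (a b : ℤ) (h : a ≤ b + 1) :
    Finset.Icc a (b + 1) = insert (b+1) (Finset.Icc a b) := by
  ext z; simp only [Finset.mem_Icc, Finset.mem_insert]; omega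

lemma geom_sum_Icc (a : ℤ) : ∀ n : ℕ,
    ∑ l ∈ Finset.Icc a (a + (n:ℤ)), ((2:ℝ)^l)⁻¹ = 2 * ((2:ℝ)^a)⁻¹ - ((2:ℝ)^(a + (n:ℤ)))⁻¹ := by
  intro n
  induction n with
  | zero => simp; ring
  | succ n ih =>
    have hcast : (a + ((n+1 : ℕ) : ℤ)) = (a + (n:ℤ)) + 1 := by push_cast; ring
    rw [hcast, Icc_int_succ a (a + (n:ℤ)) (by omega), Finset.sum_insert (by simp), ih]
    rw [zpow_add_one₀ (by norm_num : (2:ℝ) ≠ 0)]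
    have := tpos (a + (n:ℤ))
    field_simp
    ring

end Statement12Aux

open Statement12Aux in

set_option maxHeartbeats 1000000 in
theorem statement12 : ∃ cst : ℝ, 0 < cst ∧
    ∀ (S : Finset Square) (c : Square → DyadicCell),
      (∀ σ ∈ S, IsStoringCell σ (c σ)) →
    ∀ (d ψ : ℝ), 0 < d → 1 ≤ ψ → (∀ σ ∈ S, d ≤ σ.s ∧ σ.s ≤ ψ * d) →
    ∀ σ ∈ S,
      (calP S c σ).Finite ∧ ((calP S c σ).ncard : ℝ) ≤ cst * ψ := by
  refine ⟨2688, by norm_num, ?_⟩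
  intro S c hstore d ψ hd hψ hsd σ hσ
  obtain ⟨hsl, hsu⟩ := hsd σ hσ
  have hspos := σ.s_pos
  set l0 : ℤ := Int.log 2 (d/4) with hl0
  set l1 : ℤ := Int.log 2 σ.s with hl1
  have hd4 : (0:ℝ) < d/4 := by linarith
  have hL0 : (2:ℝ)^l0 ≤ d/4 := Int.zpow_log_le_self (by norm_num) hd4
  have hL0' : d/4 < (2:ℝ)^(l0+1) := Int.lt_zpow_succ_log_self (by norm_num) _
  have hL1 : (2:ℝ)^l1 ≤ σ.s := Int.zpow_log_le_self (by norm_num) hspos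
  have hL1' : σ.s < (2:ℝ)^(l1+1) := Int.lt_zpow_succ_log_self (by norm_num) _
  set T : Finset DyadicCell := (Finset.Icc l0 l1).biUnion
      (fun l => (Tlev σ l).image (fun p => ⟨l, p.1, p.2⟩)) with hT
  have hsubT : calP S c σ ⊆ ↑T := by
    intro D hD
    obtain ⟨⟨τ, hτS, hcτ⟩, hsideD, ⟨p, hp5, hpf⟩⟩ := hD
    have hτlb : τ.s/4 < D.side := by
      have := storing_side_lb (hstore τ hτS); rwa [hcτ] at this
    have hdlb : d/4 < (2:ℝ)^D.level := by
      have := (hsd τ hτS).1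
      have hds : D.side = (2:ℝ)^D.level := rfl
      rw [hds] at hτlb; linarith
    have hlvl_lb : l0 ≤ D.level := by
      have h2 : (2:ℝ)^l0 < 2^D.level := lt_of_le_of_lt hL0 hdlb
      exact ((zpow_lt_zpow_iff_right₀ (by norm_num : (1:ℝ)<2)).mp h2).le
    have hlvl_ub : D.level ≤ l1 := by
      have hds : D.side = (2:ℝ)^D.level := rfl
      rw [hds] at hsideD
      have h2 : (2:ℝ)^D.level < 2^(l1+1) := lt_of_le_of_lt hsideD hL1'
      have := (zpow_lt_zpow_iff_right₀ (by norm_num : (1:ℝ)<2)).mp h2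
      omega
    have hfr : frontier σ.toSet =
        (Set.Icc σ.x (σ.x+σ.s) ×ˢ ({σ.y, σ.y+σ.s} : Set ℝ)) ∪
        (({σ.x, σ.x+σ.s} : Set ℝ) ×ˢ Set.Icc σ.y (σ.y+σ.s)) := by
      rw [Square.toSet, frontier_prod_eq, closure_Icc, closure_Icc,
        frontier_Icc (by linarith : σ.x ≤ σ.x+σ.s), frontier_Icc (by linarith : σ.y ≤ σ.y+σ.s)]
    rw [hfr] at hpf
    rw [mem_scale5] at hp5
    obtain ⟨⟨ha1, ha2⟩, hb1, hb2⟩ := hp5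
    simp only [Set.mem_union, Set.mem_prod, Set.mem_Icc, Set.mem_insert_iff,
      Set.mem_singleton_iff] at hpf
    have hmem : (D.a, D.b) ∈ Tlev σ D.level := by
      rw [Tlev]
      rcases hpf with ⟨hp1, hp2⟩ | ⟨hp1, hp2⟩
      · apply Finset.mem_union_right
        rw [Finset.mem_product]
        refine ⟨mem_Inear hp1.1 hp1.2 ha1 ha2, ?_⟩
        rcases hp2 with h | h
        · exact Finset.mem_union_left _ (mem_Inear (le_of_eq h.symm) (le_of_eq h) hb1 hb2)
        · exact Finset.mem_union_right _ (mem_Inear (le_of_eq h.symm) (le_of_eq h) hb1 hb2)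
      · apply Finset.mem_union_left
        rw [Finset.mem_product]
        refine ⟨?_, mem_Inear hp2.1 hp2.2 hb1 hb2⟩
        rcases hp1 with h | h
        · exact Finset.mem_union_left _ (mem_Inear (le_of_eq h.symm) (le_of_eq h) ha1 ha2)
        · exact Finset.mem_union_right _ (mem_Inear (le_of_eq h.symm) (le_of_eq h) ha1 ha2)
    refine Finset.mem_coe.mpr (Finset.mem_biUnion.mpr
      ⟨D.level, Finset.mem_Icc.mpr ⟨hlvl_lb, hlvl_ub⟩, Finset.mem_image.mpr
        ⟨(D.a, D.b), hmem, rfl⟩⟩)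
  refine ⟨T.finite_toSet.subset hsubT, ?_⟩
  have hcard : ((calP S c σ).ncard : ℝ) ≤ (T.card : ℝ) := by
    have h := Set.ncard_le_ncard hsubT T.finite_toSet
    rw [Set.ncard_coe_finset] at h
    exact_mod_cast h
  have hTbound : (T.card : ℝ) ≤ 2688 * ψ := by
    rcases le_or_gt l0 l1 with hle | hlt
    · obtain ⟨n, hn⟩ : ∃ n : ℕ, l1 = l0 + n := ⟨(l1 - l0).toNat, by omega⟩
      have hTc : (T.card : ℝ) ≤ ∑ l ∈ Finset.Icc l0 l1, ((Tlev σ l).card : ℝ) := by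
        have h1 := Finset.card_biUnion_le (s := Finset.Icc l0 l1)
          (t := fun l => (Tlev σ l).image (fun p => (⟨l, p.1, p.2⟩ : DyadicCell)))
        have h2 : ∑ l ∈ Finset.Icc l0 l1,
            ((Tlev σ l).image (fun p => (⟨l, p.1, p.2⟩ : DyadicCell))).card
            ≤ ∑ l ∈ Finset.Icc l0 l1, (Tlev σ l).card :=
          Finset.sum_le_sum (fun l _ => Finset.card_image_le)
        have h3 : T.card ≤ ∑ l ∈ Finset.Icc l0 l1, (Tlev σ l).card := le_trans h1 h2
        calc (T.card : ℝ) ≤ ((∑ l ∈ Finset.Icc l0 l1, (Tlev σ l).card : ℕ) : ℝ) := by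
              exact_mod_cast h3
          _ = ∑ l ∈ Finset.Icc l0 l1, ((Tlev σ l).card : ℝ) := by push_cast; rfl
      have hsum : ∑ l ∈ Finset.Icc l0 l1, ((Tlev σ l).card : ℝ)
          ≤ ∑ l ∈ Finset.Icc l0 l1, (24 * (σ.s / 2^l) + 144) :=
        Finset.sum_le_sum (fun l _ => card_Tlev σ l)
      have hNcard : (Finset.Icc l0 l1).card = n + 1 := by
        rw [Int.card_Icc]; omega
      have hsplit : ∑ l ∈ Finset.Icc l0 l1, (24 * (σ.s / 2^l) + 144)
          = (24 * σ.s) * (∑ l ∈ Finset.Icc l0 l1, ((2:ℝ)^l)⁻¹) + 144 * ((n:ℝ)+1) := by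
        have he : ∀ l ∈ Finset.Icc l0 l1,
            24 * (σ.s / 2^l) + 144 = (24*σ.s) * ((2:ℝ)^l)⁻¹ + 144 := by
          intro l _; rw [div_eq_mul_inv]; ring
        rw [Finset.sum_congr rfl he, Finset.sum_add_distrib, ← Finset.mul_sum,
          Finset.sum_const, hNcard]
        push_cast; ring
      have hgeo : (∑ l ∈ Finset.Icc l0 l1, ((2:ℝ)^l)⁻¹) ≤ 2 * ((2:ℝ)^l0)⁻¹ := by
        rw [hn, geom_sum_Icc l0 n]
        have := tpos (l0 + (n:ℤ))
        have : (0:ℝ) < ((2:ℝ)^(l0 + (n:ℤ)))⁻¹ := by positivity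
        linarith
      have hinv : ((2:ℝ)^l0)⁻¹ ≤ 8/d := by
        have h8 : d/8 < (2:ℝ)^l0 := by
          have := tpos l0
          rw [zpow_add_one₀ (by norm_num : (2:ℝ) ≠ 0)] at hL0'
          linarith
        have hdpos8 : (0:ℝ) < d/8 := by linarith
        rw [inv_le_comm₀ (tpos l0) (by positivity)]
        have : (d/8 : ℝ) ≤ (8/d)⁻¹ → False → True := fun _ _ => trivial
        rw [inv_div]
        linarith
      have hn8 : (2:ℝ)^(n:ℕ) ≤ 8 * ψ := by
        have hz : (2:ℝ)^(l0 + (n:ℤ)) = (2:ℝ)^l0 * (2:ℝ)^(n:ℕ) := by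
          rw [zpow_add₀ (by norm_num : (2:ℝ) ≠ 0), zpow_natCast]
        have h1 : (2:ℝ)^l0 * (2:ℝ)^(n:ℕ) ≤ σ.s := by rw [← hz, ← hn]; exact hL1
        have h2 : d/8 < (2:ℝ)^l0 := by
          rw [zpow_add_one₀ (by norm_num : (2:ℝ) ≠ 0)] at hL0'; linarith
        have h3 : (0:ℝ) < (2:ℝ)^(n:ℕ) := by positivity
        have h4 : d/8 * (2:ℝ)^(n:ℕ) ≤ σ.s := le_trans (by nlinarith) h1
        have h5 : σ.s ≤ ψ * d := hsu
        nlinarith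
      have hnn : ((n:ℝ)+1) ≤ 2 * (2:ℝ)^(n:ℕ) := by
        have h1 : (n:ℝ) < (2:ℝ)^(n:ℕ) := by exact_mod_cast (Nat.lt_two_pow_self (n := n))
        have h2 : (1:ℝ) ≤ (2:ℝ)^(n:ℕ) := one_le_pow₀ (by norm_num)
        linarith
      have hfin : (24 * σ.s) * (2 * ((2:ℝ)^l0)⁻¹) + 144 * ((n:ℝ)+1) ≤ 2688 * ψ := by
        have hA : (24 * σ.s) * (2 * ((2:ℝ)^l0)⁻¹) ≤ 48 * σ.s * (8/d) := by
          have hinv0 : (0:ℝ) ≤ ((2:ℝ)^l0)⁻¹ := by positivity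
          nlinarith
        have hA2 : 48 * σ.s * (8/d) ≤ 384 * ψ := by
          have hdiv : σ.s / d ≤ ψ := (div_le_iff₀ hd).mpr hsu
          have : 48 * σ.s * (8/d) = 384 * (σ.s / d) := by ring
          rw [this]; linarith
        have hB : 144 * ((n:ℝ)+1) ≤ 144 * (2 * (2:ℝ)^(n:ℕ)) := by linarith
        have hB2 : 144 * (2 * (2:ℝ)^(n:ℕ)) ≤ 2304 * ψ := by linarith
        linarith
      have hmono : (24 * σ.s) * (∑ l ∈ Finset.Icc l0 l1, ((2:ℝ)^l)⁻¹)
          ≤ (24 * σ.s) * (2 * ((2:ℝ)^l0)⁻¹) := by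
        apply mul_le_mul_of_nonneg_left hgeo (by positivity)
      calc (T.card : ℝ) ≤ ∑ l ∈ Finset.Icc l0 l1, (24 * (σ.s / 2^l) + 144) :=
            le_trans hTc hsum
        _ = (24 * σ.s) * (∑ l ∈ Finset.Icc l0 l1, ((2:ℝ)^l)⁻¹) + 144 * ((n:ℝ)+1) := hsplit
        _ ≤ (24 * σ.s) * (2 * ((2:ℝ)^l0)⁻¹) + 144 * ((n:ℝ)+1) := by linarith
        _ ≤ 2688 * ψ := hfin
    · have hempty : Finset.Icc l0 l1 = ∅ := Finset.Icc_eq_empty (by omega)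
      have : T = ∅ := by rw [hT, hempty]; simp
      rw [this]
      simp
      positivity
  linarith
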